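/- Let p be a prime and let m = a·p^k and n = b·p^k with k ≥ 0, 0 < a ≤ b < p, and a + b ≤ p. Then the first m terms of s_p(m,n) form the sequence ((a+b−1)p^k : p^k) ⊕ ((a+b−3)p^k : p^k) ⊕ ⋯ ⊕ ((b−a+1)p^k : p^k) (a constant blocks of length p^k each), and the next n − m terms are all 0; that is, λ(m,n,p) takes the value (a+b+1−2j)·p^k on positions (j−1)p^k + 1 through j·p^k for each 1 ≤ j ≤ a. -/

import Mathlib

/-- The negative reverse of a sequence `(a₁, …, a_u)`, namely `(−a_u, …, −a₁)`. -/
def negRev (s : List ℤ) : List ℤ := s.reverse.map (fun x => -x)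

/-- Fuel-based implementation of Barry's recursively defined sequence `s_p(m,n)`.
In every recursive call the quantity `2*m + n` strictly decreases, so fuel
`2*m + n + 1` always suffices; see `sp` below. -/
def spAux (p : ℕ) : ℕ → ℕ → ℕ → List ℤ
  | 0, _, _ => []
  | (fuel+1), m, n =>
    if m = 0 then List.replicate n (0 : ℤ)
    else
      let k := Nat.log p n
      let q := p ^ k
      let b := n / q
      let d := n % q
      let a := m / q
      let c := m % q
      let s12 : List ℤ × List ℤ :=
        if p ^ (k+1) < m + n then
          -- Case 1
          (List.replicate (m + n - p ^ (k+1)) ((p ^ (k+1) : ℕ) : ℤ),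
           spAux p fuel (p ^ (k+1) - n) (p ^ (k+1) - m))
        else if q < c + d then
          -- Case 2
          (List.replicate (c + d - q) (((a + b + 1) * q : ℕ) : ℤ),
           spAux p fuel ((a + b + 1) * q - n) ((a + b + 1) * q - m))
        else if 1 ≤ c + d ∧ 0 < a then
          -- Case 3
          ((spAux p fuel (min c d) (max c d)).map (fun x => x + (((a + b) * q : ℕ) : ℤ)),
           spAux p fuel ((a + b) * q - n) ((a + b) * q - m))
        else if a = 0 ∧ 0 < d then
          -- Case 4
          (((spAux p fuel m (b * q - d)).filter (fun x => decide (x < 0))).map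
              (fun x => x + ((2 * b * q : ℕ) : ℤ)),
           List.replicate (n - m) (0 : ℤ))
        else if a = 0 ∧ d = 0 then
          -- Case 5
          (List.replicate m ((b * q : ℕ) : ℤ),
           List.replicate (b * q - m) (0 : ℤ))
        else
          -- Case 6
          (List.replicate q (((a + b - 1) * q : ℕ) : ℤ),
           spAux p fuel ((a - 1) * q) ((b - 1) * q))
      s12.1 ++ s12.2 ++ negRev s12.1

/-- Barry's sequence `s_p(m,n)`, a nonincreasing sequence of `m + n` integers. -/
def sp (p m n : ℕ) : List ℤ := spAux p (2 * m + n + 1) m n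

/-- The Jordan partition `λ(m,n,p)`: the first `m` terms of `s_p(m,n)`. -/
def jordanPartition (p m n : ℕ) : List ℤ := (sp p m n).take m

/-- `λ(m,n,p)` is standard iff `λ_i = m + n − 2i + 1` for all `1 ≤ i ≤ m`. -/
def IsStandard (p m n : ℕ) : Prop :=
  jordanPartition p m n =
    (List.range m).map (fun i => (m : ℤ) + (n : ℤ) - 2 * ((i : ℤ) + 1) + 1)

lemma spAux_case6 (p fuel m n k a b : ℕ) (hm : m ≠ 0)
    (hk : Nat.log p n = k) (hm' : m = a * p ^ k) (hn' : n = b * p ^ k)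
    (hq : 0 < p ^ k) (ha : a ≠ 0) (h1 : ¬ p ^ (k+1) < m + n) :
    spAux p (fuel+1) m n =
      List.replicate (p^k) (((a + b - 1) * p^k : ℕ) : ℤ) ++
      spAux p fuel ((a - 1) * p^k) ((b - 1) * p^k) ++
      negRev (List.replicate (p^k) (((a + b - 1) * p^k : ℕ) : ℤ)) := by
  have hdm : m / p ^ k = a := by rw [hm', Nat.mul_div_cancel _ hq]
  have hdn : n / p ^ k = b := by rw [hn', Nat.mul_div_cancel _ hq]
  have hrm : m % p ^ k = 0 := by rw [hm']; exact Nat.mul_mod_left _ _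
  have hrn : n % p ^ k = 0 := by rw [hn']; exact Nat.mul_mod_left _ _
  simp only [spAux, if_neg hm, hk, hdm, hdn, hrm, hrn, if_neg h1]
  norm_num [ha]

lemma blocks_length (q a : ℕ) (f : ℕ → ℤ) :
    ((List.range a).flatMap (fun j => List.replicate q (f j))).length = a * q := by
  induction a with
  | zero => simp
  | succ a ih => rw [List.range_succ]; simp [ih, Nat.succ_mul]

lemma blocks_succ (q a : ℕ) (f : ℕ → ℤ) :
    ((List.range (a+1)).flatMap (fun j => List.replicate q (f j))) =
      List.replicate q (f 0) ++
        ((List.range a).flatMap (fun j => List.replicate q (f (j+1)))) := by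
  rw [List.range_succ_eq_map]
  simp [List.flatMap_map]

lemma blocks_getElem? (q : ℕ) (hq : 0 < q) (a : ℕ) (f : ℕ → ℤ) :
    ∀ t, t < a * q →
      ((List.range a).flatMap (fun j => List.replicate q (f j)))[t]? = some (f (t / q)) := by
  induction a generalizing f with
  | zero => intro t ht; simp at ht
  | succ a ih =>
    intro t ht
    rw [blocks_succ]
    rcases lt_or_ge t q with h | h
    · rw [List.getElem?_append_left (by simpa using h)]
      rw [Nat.div_eq_of_lt h]
      simp [h]
    · rw [List.getElem?_append_right (by simpa using h)]
      have ht' : t - q < a * q := by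
        have h2 : (a+1) * q = a * q + q := Nat.succ_mul a q
        omega
      rw [List.length_replicate, ih _ _ ht']
      congr 1
      rw [Nat.div_eq_sub_div hq h]

def Tblocks (q a b : ℕ) : List ℤ :=
  (List.range a).flatMap
    (fun (j : ℕ) => List.replicate q (((a : ℤ) + (b : ℤ) - 1 - 2 * (j : ℤ)) * (q : ℤ)))

def Tlist (q a b : ℕ) : List ℤ :=
  Tblocks q a b ++ List.replicate ((b - a) * q) 0 ++ negRev (Tblocks q a b)

lemma negRev_append (s t : List ℤ) : negRev (s ++ t) = negRev t ++ negRev s := by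
  simp [negRev]

lemma negRev_replicate (q : ℕ) (v : ℤ) :
    negRev (List.replicate q v) = List.replicate q (-v) := by
  simp [negRev]

lemma spAux_T (p : ℕ) (hp : p.Prime) (k : ℕ) :
    ∀ a b fuel, a ≤ b → b < p → a + b ≤ p → a < fuel →
      spAux p fuel (a * p ^ k) (b * p ^ k) = Tlist (p ^ k) a b := by
  have hq : 0 < p ^ k := Nat.pow_pos (n := k) hp.pos
  intro a
  induction a with
  | zero =>
    intro b fuel hab hbp habp hf
    obtain ⟨f, rfl⟩ : ∃ f, fuel = f + 1 := ⟨fuel - 1, by omega⟩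
    simp [spAux, Tlist, Tblocks, negRev]
  | succ a ih =>
    intro b fuel hab hbp habp hf
    obtain ⟨f, rfl⟩ : ∃ f, fuel = f + 1 := ⟨fuel - 1, by omega⟩
    obtain ⟨b', rfl⟩ : ∃ b', b = b' + 1 := ⟨b - 1, by omega⟩
    have hlog : Nat.log p ((b' + 1) * p ^ k) = k := by
      apply Nat.log_eq_of_pow_le_of_lt_pow
      · exact Nat.le_mul_of_pos_left _ (by omega)
      · rw [pow_succ, mul_comm (p ^ k) p]
        exact Nat.mul_lt_mul_of_lt_of_le (by omega) (le_refl _) hq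
    rw [spAux_case6 p f _ _ k (a + 1) (b' + 1) (by positivity) hlog rfl rfl hq (by omega)
      (by
        rw [pow_succ, ← Nat.add_mul, mul_comm (p ^ k) p]
        exact not_lt.mpr (Nat.mul_le_mul_right _ (by omega)))]
    have e1 : (a + 1 - 1) = a := by omega
    have e2 : (b' + 1 - 1) = b' := by omega
    rw [e1, e2, ih b' f (by omega) (by omega) (by omega) (by omega)]
    have hv : ((a + 1 + (b' + 1) - 1) * p ^ k : ℕ) = (a + b' + 1) * p ^ k := by
      have h2 : a + 1 + (b' + 1) - 1 = a + b' + 1 := by omega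
      rw [h2]
    rw [hv]
    unfold Tlist
    rw [show Tblocks (p ^ k) (a + 1) (b' + 1) =
        List.replicate (p ^ k) (((a + b' + 1) * p ^ k : ℕ) : ℤ) ++ Tblocks (p ^ k) a b' by
      unfold Tblocks
      rw [blocks_succ]
      congr 1
      · congr 1
        push_cast
        ring
      · congr 1
        funext j
        congr 1
        push_cast
        ring]
    rw [negRev_append, show (b' + 1 - (a + 1)) = b' - a from by omega]
    simp [List.append_assoc]

/-- In Case 6 (`m = a·pᵏ`, `n = b·pᵏ`, `0 < a ≤ b < p`, `a + b ≤ p`), the first `m`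
terms of `s_p(m,n)` form `((a+b−1)pᵏ : pᵏ) ⊕ ((a+b−3)pᵏ : pᵏ) ⊕ ⋯ ⊕ ((b−a+1)pᵏ : pᵏ)`
(`a` constant blocks of length `pᵏ`), and the next `n − m` terms are all `0`; that is,
`λ(m,n,p)` takes the value `(a+b+1−2j)·pᵏ` on positions `(j−1)pᵏ + 1` through `j·pᵏ`
for each `1 ≤ j ≤ a`. -/
theorem jordanPartition_case6_blocks (p : ℕ) (hp : Nat.Prime p)
    (k a b : ℕ) (ha0 : 0 < a) (hab : a ≤ b) (hbp : b < p) (habp : a + b ≤ p) :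
    jordanPartition p (a * p ^ k) (b * p ^ k) =
      (List.range a).flatMap
        (fun j => List.replicate (p ^ k) (((a : ℤ) + (b : ℤ) - 1 - 2 * (j : ℤ)) * (p : ℤ) ^ k)) ∧
    (∀ i, a * p ^ k ≤ i → i < b * p ^ k →
      (sp p (a * p ^ k) (b * p ^ k)).getD i 0 = 0) ∧
    (∀ j, 1 ≤ j → j ≤ a → ∀ i, (j - 1) * p ^ k + 1 ≤ i → i ≤ j * p ^ k →
      (sp p (a * p ^ k) (b * p ^ k)).getD (i - 1) 0 =
        ((a : ℤ) + (b : ℤ) + 1 - 2 * (j : ℤ)) * (p : ℤ) ^ k) := by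
  have hq : 0 < p ^ k := Nat.pow_pos (n := k) hp.pos
  have hfuel : a < 2 * (a * p ^ k) + b * p ^ k + 1 := by
    have : a ≤ a * p ^ k := Nat.le_mul_of_pos_right a hq
    omega
  have hsp : sp p (a * p ^ k) (b * p ^ k) = Tlist (p ^ k) a b :=
    spAux_T p hp k a b _ hab hbp habp hfuel
  have hcast : ((p ^ k : ℕ) : ℤ) = (p : ℤ) ^ k := by push_cast; ring
  have hTB : Tblocks (p ^ k) a b =
      (List.range a).flatMap
        (fun j => List.replicate (p ^ k) (((a : ℤ) + (b : ℤ) - 1 - 2 * (j : ℤ)) * (p : ℤ) ^ k)) := by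
    unfold Tblocks
    rw [hcast]
    simp [List.flatMap_map, List.flatMap_assoc]
  have hlenB : (Tblocks (p ^ k) a b).length = a * p ^ k := blocks_length _ _ _
  have hmul : a * p ^ k ≤ b * p ^ k := Nat.mul_le_mul_right _ hab
  have hmid : ((b - a) * p ^ k) = b * p ^ k - a * p ^ k := Nat.sub_mul b a _
  have hlen2 : (Tblocks (p ^ k) a b ++ List.replicate ((b - a) * p ^ k) (0 : ℤ)).length
      = b * p ^ k := by
    rw [List.length_append, hlenB, List.length_replicate, hmid]; omega
  refine ⟨?_, ?_, ?_⟩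
  · rw [jordanPartition, hsp]
    unfold Tlist
    rw [List.take_append_of_le_length, List.take_append_of_le_length,
      List.take_of_length_le (le_of_eq hlenB), hTB]
    · omega
    · rw [List.length_append, hlenB, List.length_replicate]; omega
  · intro i hi hi'
    rw [hsp, List.getD_eq_getElem?_getD]
    unfold Tlist
    rw [List.getElem?_append_left (by rw [hlen2]; omega),
      List.getElem?_append_right (by omega), hlenB,
      List.getElem?_eq_getElem (by rw [List.length_replicate]; omega)]
    simp
  · intro j hj1 hja i hi1 hi2
    have hjq : j * p ^ k ≤ a * p ^ k := Nat.mul_le_mul_right _ hja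
    have hjq0 : p ^ k ≤ j * p ^ k := Nat.le_mul_of_pos_left _ hj1
    have hjq' : (j - 1) * p ^ k + p ^ k = j * p ^ k := by
      rw [Nat.sub_mul, one_mul]; omega
    have ht : i - 1 < a * p ^ k := by omega
    rw [hsp, List.getD_eq_getElem?_getD]
    unfold Tlist
    rw [List.getElem?_append_left (by rw [hlen2]; exact lt_of_lt_of_le ht hmul),
      List.getElem?_append_left (by rw [hlenB]; exact ht)]
    unfold Tblocks
    rw [blocks_getElem? _ hq _ _ _ ht]
    have hdiv : (i - 1) / p ^ k = j - 1 :=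
      Nat.div_eq_of_lt_le (by omega) (by rw [Nat.succ_mul, hjq']; omega)
    rw [hdiv]
    simp only [Option.getD_some]
    rw [Nat.cast_sub hj1]
    push_cast
    ring
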